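/- arXiv:1908.07569 — 5 statements merged into one kernel-verified Lean document; each statement's English description precedes it below -/
import Mathlib

section
/- If P is a monic polynomial with integer coefficients all of whose complex roots lie on the unit circle, then every root of P is a root of unity. -/
open IntermediateField

/-- Kronecker's theorem: a monic integer polynomial all of whose complex roots
lie on the unit circle has only roots of unity as roots. -/
theorem stmt_1 (P : Polynomial ℤ) (hmonic : P.Monic) (hdeg : 0 < P.natDegree)
    (hroots : ∀ z : ℂ, (Polynomial.aeval z) P = 0 → ‖z‖ = 1) :
    ∀ z : ℂ, (Polynomial.aeval z) P = 0 → ∃ m : ℕ, 0 < m ∧ z ^ m = 1 := by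
  intro z hz
  have hzint : IsIntegral ℤ z := ⟨P, hmonic, by simpa [Polynomial.aeval_def] using hz⟩
  have hzalg : IsIntegral ℚ z := hzint.tower_top
  haveI : FiniteDimensional ℚ ℚ⟮z⟯ := IntermediateField.adjoin.finiteDimensional hzalg
  haveI : NumberField ℚ⟮z⟯ := { }
  set x : ℚ⟮z⟯ := ⟨z, IntermediateField.mem_adjoin_simple_self ℚ z⟩ with hxdef
  have hxz : (algebraMap ℚ⟮z⟯ ℂ) x = z := rfl
  have hxP : Polynomial.aeval x P = 0 := by
    have h1 : (algebraMap ℚ⟮z⟯ ℂ) (Polynomial.aeval x P) = 0 := by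
      rw [← Polynomial.aeval_algebraMap_apply, hxz, hz]
    exact (map_eq_zero_iff _ (algebraMap ℚ⟮z⟯ ℂ).injective).mp h1
  have hxint : IsIntegral ℤ x := ⟨P, hmonic, by simpa [Polynomial.aeval_def] using hxP⟩
  have key : ∀ φ : ℚ⟮z⟯ →+* ℂ, ‖φ x‖ = 1 := by
    intro φ
    have : Polynomial.aeval (φ x) P = 0 := by
      rw [show φ x = φ.toIntAlgHom x from rfl, Polynomial.aeval_algHom_apply φ.toIntAlgHom x P, hxP, map_zero]
    simpa using hroots (φ x) this
  obtain ⟨n, hn, hxn⟩ := NumberField.Embeddings.pow_eq_one_of_norm_eq_one ℚ⟮z⟯ ℂ hxint key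
  refine ⟨n, hn, ?_⟩
  have := congrArg (algebraMap ℚ⟮z⟯ ℂ) hxn
  simpa [hxz] using this
end

section
/- If P is a monic polynomial with integer coefficients all of whose complex roots lie in the real interval [-2,2], then every root of P can be written as z + z̄ for some root of unity z. -/
set_option maxHeartbeats 1000000

open Polynomial IntermediateField

/-- If `P` is a monic integer polynomial all of whose complex roots lie in the
real interval `[-2,2]`, then every root of `P` is of the form `z + z̄` for some
root of unity `z`. -/
theorem stmt_2 (P : Polynomial ℤ) (hmonic : P.Monic) (hdeg : 0 < P.natDegree)
    (hroots : ∀ z : ℂ, (Polynomial.aeval z) P = 0 →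
      ∃ x : ℝ, x ∈ Set.Icc (-2 : ℝ) 2 ∧ z = (x : ℂ)) :
    ∀ z : ℂ, (Polynomial.aeval z) P = 0 →
      ∃ w : ℂ, (∃ m : ℕ, 0 < m ∧ w ^ m = 1) ∧ z = w + (starRingEnd ℂ) w := by
  intro z hz
  obtain ⟨x, hx, rfl⟩ := hroots z hz
  obtain ⟨hxl, hxu⟩ := hx
  set b : ℝ := Real.sqrt (4 - x ^ 2) / 2 with hbdef
  have hb2 : b ^ 2 = (4 - x ^ 2) / 4 := by
    rw [hbdef, div_pow, Real.sq_sqrt (by nlinarith)]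
    ring
  set w : ℂ := (x : ℂ) / 2 + (b : ℂ) * Complex.I with hwdef
  have hb2C : (b : ℂ) ^ 2 = (4 - (x : ℂ) ^ 2) / 4 := by
    have := congrArg (fun t : ℝ => (t : ℂ)) hb2
    push_cast at this
    exact this
  -- the quadratic equation for w
  have hq : w ^ 2 - (x : ℂ) * w + 1 = 0 := by
    rw [hwdef]
    linear_combination (b : ℂ) ^ 2 * Complex.I_sq - hb2C
  have hw0 : w ≠ 0 := by
    intro h
    rw [h] at hq
    norm_num at hq
  have hconj : (x : ℂ) = w + (starRingEnd ℂ) w := by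
    have hre : w.re = x / 2 := by simp [hwdef]
    rw [Complex.add_conj, hre]
    push_cast
    ring
  -- x written using w and its inverse
  have hx_eq : (x : ℂ) = w + w⁻¹ := by
    have hmul : w * ((x : ℂ) - w) = 1 := by linear_combination -hq
    rw [inv_eq_of_mul_eq_one_right hmul]
    ring
  -- integrality of x over ℤ
  have hxint : IsIntegral ℤ ((x : ℝ) : ℂ) := ⟨P, hmonic, hz⟩
  -- integrality of w over ℤ
  haveI : Algebra.IsIntegral ℤ (Algebra.adjoin ℤ ({((x:ℝ):ℂ)} : Set ℂ)) := by
    refine Algebra.IsIntegral.adjoin ?_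
    rintro y hy
    rw [Set.mem_singleton_iff] at hy
    subst hy
    exact hxint
  have hwZ : IsIntegral ℤ w := by
    refine isIntegral_trans (A := Algebra.adjoin ℤ ({((x:ℝ):ℂ)} : Set ℂ)) w ?_
    refine ⟨X ^ 2 + (1 - C ⟨(x : ℂ), Algebra.self_mem_adjoin_singleton ℤ _⟩ * X), ?_, ?_⟩
    · refine monic_X_pow_add ?_
      refine lt_of_le_of_lt (degree_sub_le _ _) ?_
      simp only [degree_one]
      refine max_lt (by norm_num) (lt_of_le_of_lt (degree_mul_le _ _) ?_)
      refine lt_of_le_of_lt (add_le_add (degree_C_le) (le_refl (degree (X : Polynomial (Algebra.adjoin ℤ ({((x:ℝ):ℂ)} : Set ℂ))))) ) ?_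
      simp
    · have : (algebraMap (Algebra.adjoin ℤ ({((x:ℝ):ℂ)} : Set ℂ)) ℂ)
          ⟨(x : ℂ), Algebra.self_mem_adjoin_singleton ℤ _⟩ = (x : ℂ) := rfl
      simp only [eval₂_add, eval₂_pow, eval₂_X, eval₂_sub, eval₂_one, eval₂_mul, eval₂_C, this]
      linear_combination hq
  have hwQ : IsIntegral ℚ w := hwZ.tower_top
  -- the number field ℚ(w)
  set K : IntermediateField ℚ ℂ := ℚ⟮w⟯ with hK
  haveI : FiniteDimensional ℚ K := IntermediateField.adjoin.finiteDimensional hwQ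
  haveI : NumberField K := ⟨⟩
  have hwK : w ∈ K := mem_adjoin_simple_self ℚ w
  have hxK : (x : ℂ) ∈ K := by
    rw [hx_eq]
    exact add_mem hwK (inv_mem hwK)
  set W : K := ⟨w, hwK⟩ with hW
  set XK : K := ⟨(x : ℂ), hxK⟩ with hXK
  have hinj : Function.Injective (algebraMap K ℂ) := (algebraMap K ℂ).injective
  have hqK : W ^ 2 - XK * W + 1 = 0 := by
    apply hinj
    push_cast
    convert hq using 2
    rfl
  have hWint : IsIntegral ℤ W := by
    rw [← isIntegral_algebraMap_iff (A := K) (B := ℂ) hinj]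
    exact hwZ
  have haevalXK : (Polynomial.aeval XK) P = 0 := by
    apply hinj
    rw [map_zero, ← Polynomial.aeval_algebraMap_apply]
    exact hz
  -- all conjugates of W have norm 1
  have hnorm : ∀ φ : K →+* ℂ, ‖φ W‖ = 1 := by
    intro φ
    have h1 : (φ W) ^ 2 - (φ XK) * (φ W) + 1 = 0 := by
      have := congrArg φ hqK
      simpa [map_pow, map_mul, map_sub, map_add, map_one] using this
    have h2 : (Polynomial.aeval (φ XK)) P = 0 := by
      have h := Polynomial.aeval_algHom_apply φ.toIntAlgHom XK P
      rw [haevalXK, map_zero] at h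
      exact h
    obtain ⟨x', hx', hxeq⟩ := hroots (φ XK) h2
    rw [hxeq] at h1
    obtain ⟨hx'l, hx'u⟩ := hx'
    set u := φ W with hu
    have h1c : ((starRingEnd ℂ) u) ^ 2 - (x' : ℂ) * (starRingEnd ℂ) u + 1 = 0 := by
      have := congrArg (starRingEnd ℂ) h1
      simpa [map_pow, map_mul, map_sub, map_add, map_one, Complex.conj_ofReal] using this
    have key : ((starRingEnd ℂ) u - u) * ((starRingEnd ℂ) u - ((x' : ℂ) - u)) = 0 := by
      linear_combination h1c - h1
    rcases mul_eq_zero.mp key with hcase | hcase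
    · -- u is real
      have hre : u = ((u.re : ℝ) : ℂ) := by
        have := sub_eq_zero.mp hcase
        exact (Complex.conj_eq_iff_re.mp this).symm
      set t : ℝ := u.re with ht
      rw [hre] at h1
      have h1r : t ^ 2 - x' * t + 1 = 0 := by
        have : (((t ^ 2 - x' * t + 1 : ℝ)) : ℂ) = 0 := by push_cast; linear_combination h1
        exact_mod_cast this
      have hd : (t - x' / 2) ^ 2 = x' ^ 2 / 4 - 1 := by linear_combination h1r
      have h4 : x' ^ 2 = 4 := by nlinarith [sq_nonneg (t - x' / 2)]
      have ht' : t = x' / 2 := by nlinarith [sq_nonneg (t - x' / 2)]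
      have ht2 : t ^ 2 = 1 := by rw [ht']; linear_combination h4 / 4
      have : (t - 1) * (t + 1) = 0 := by linear_combination ht2
      rw [hre]
      rcases mul_eq_zero.mp this with h | h
      · have : t = 1 := by linarith
        simp [this]
      · have : t = -1 := by linarith
        simp [this]
    · -- conj u = x' - u
      have hcu : (starRingEnd ℂ) u = (x' : ℂ) - u := sub_eq_zero.mp hcase
      have : u * (starRingEnd ℂ) u = 1 := by
        rw [hcu]
        linear_combination -h1
      rw [Complex.mul_conj] at this
      have hns : Complex.normSq u = 1 := by exact_mod_cast this
      have hsq : ‖u‖ ^ 2 = 1 := by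
        rw [Complex.sq_norm, hns]
      nlinarith [norm_nonneg u]
  obtain ⟨n, hn, hWn⟩ := NumberField.Embeddings.pow_eq_one_of_norm_eq_one K ℂ hWint hnorm
  refine ⟨w, ⟨n, hn, ?_⟩, hconj⟩
  have := congrArg (algebraMap K ℂ) hWn
  push_cast at this
  exact this
end

section
/- For the unit circle 𝕌, the maximum of ∏_{1≤i<j≤n} |z_i - z_j| over z_1,…,z_n ∈ 𝕌 equals n^{n/2}, and this maximum is attained exactly when {z_1,…,z_n} is a rotated copy of the set of n-th roots of unity. -/
open Finset Matrix Complex Polynomial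
open scoped ComplexOrder

namespace Stmt7Aux

/-- Reindex the product over ordered pairs. -/
lemma prod_pairs {n : ℕ} {M : Type*} [CommMonoid M] (f : Fin n → Fin n → M) :
    ∏ p ∈ Finset.univ.filter (fun p : Fin n × Fin n => p.1 < p.2), f p.1 p.2
      = ∏ i, ∏ j ∈ Finset.Ioi i, f i j := by
  rw [Finset.prod_sigma']
  refine Finset.prod_nbij' (fun p => ⟨p.1, p.2⟩) (fun p => (p.1, p.2)) ?_ ?_ ?_ ?_ ?_ <;>
    simp (config := {contextual := true}) [Finset.mem_sigma]

/-- The pair product of distances as |det Vandermonde|. -/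
lemma absdet (n : ℕ) (z : Fin n → ℂ) :
    ‖(vandermonde z).det‖
      = ∏ p ∈ Finset.univ.filter (fun p : Fin n × Fin n => p.1 < p.2),
          ‖z p.1 - z p.2‖ := by
  rw [prod_pairs (fun i j => ‖z i - z j‖), Matrix.det_vandermonde, norm_prod]
  refine Finset.prod_congr rfl fun i _ => ?_
  rw [norm_prod]
  exact Finset.prod_congr rfl fun j _ => (norm_sub_rev _ _)

lemma gram_entry {n : ℕ} (z : Fin n → ℂ) (i j : Fin n) :
    (vandermonde z * (vandermonde z)ᴴ) i j
      = ∑ k ∈ Finset.range n, (z i * (starRingEnd ℂ) (z j)) ^ k := by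
  rw [Matrix.mul_apply]
  simp only [vandermonde, conjTranspose_apply, Matrix.of_apply, star_pow, Complex.star_def,
    ← mul_pow]
  rw [Fin.sum_univ_eq_sum_range (fun k => (z i * (starRingEnd ℂ) (z j)) ^ k)]

lemma det_gram {n : ℕ} (z : Fin n → ℂ) :
    ((‖(vandermonde z).det‖ ^ 2 : ℝ) : ℂ)
      = (vandermonde z * (vandermonde z)ᴴ).det := by
  rw [Matrix.det_mul, Matrix.det_conjTranspose, Complex.star_def, Complex.mul_conj,
    ← Complex.normSq_eq_norm_sq]

/-- Geometric sum criterion. -/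
lemma geom_iff {n : ℕ} (hn : 0 < n) (w : ℂ) :
    (∑ k ∈ Finset.range n, w ^ k = 0) ↔ (w ≠ 1 ∧ w ^ n = 1) := by
  constructor
  · intro h
    have hw : w ≠ 1 := by
      rintro rfl
      simp only [one_pow, Finset.sum_const, Finset.card_range, nsmul_eq_mul, mul_one] at h
      exact_mod_cast (Nat.cast_ne_zero (R := ℂ)).mpr hn.ne' h
    refine ⟨hw, ?_⟩
    have := geom_sum_mul w n
    rw [h, zero_mul] at this
    have := sub_eq_zero.mp this.symm
    linear_combination this
  · rintro ⟨hw, hwn⟩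
    rw [geom_sum_eq hw, hwn, sub_self, zero_div]

lemma sum_eigen {n : ℕ} {A : Matrix (Fin n) (Fin n) ℂ} (hA : A.IsHermitian) :
    (∑ i, (hA.eigenvalues i : ℂ)) = A.trace := by
  conv_rhs => rw [hA.spectral_theorem, Unitary.conjStarAlgAut_apply]
  rw [Matrix.trace_mul_comm, ← mul_assoc]
  rw [(Matrix.mem_unitaryGroup_iff').mp (hA.eigenvectorUnitary).2]
  rw [one_mul, Matrix.trace_diagonal]
  rfl

lemma eq_smul_one {n : ℕ} {A : Matrix (Fin n) (Fin n) ℂ} (hA : A.IsHermitian) (c : ℝ)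
    (h : ∀ i, hA.eigenvalues i = c) : A = (c : ℂ) • 1 := by
  have h1 : (RCLike.ofReal ∘ hA.eigenvalues : Fin n → ℂ) = fun _ => (c : ℂ) := by
    funext i; simp [Function.comp, h i]
  rw [hA.spectral_theorem, h1, ← Matrix.smul_one_eq_diagonal, Unitary.conjStarAlgAut_apply]
  rw [Matrix.mul_smul, Matrix.smul_mul, mul_one]
  rw [(Matrix.mem_unitaryGroup_iff).mp (hA.eigenvectorUnitary).2]

lemma amgm {m : ℕ} {c : ℝ} (hc : 0 < c) (l : Fin m → ℝ) (h0 : ∀ i, 0 ≤ l i)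
    (hsum : ∑ i, l i = m * c) :
    ∏ i, l i ≤ c ^ m ∧ (∏ i, l i = c ^ m → ∀ i, l i = c) := by
  by_cases hpos : ∀ i, 0 < l i
  · have hlog : ∀ i, Real.log (l i / c) ≤ l i / c - 1 :=
      fun i => Real.log_le_sub_one_of_pos (div_pos (hpos i) hc)
    have hsum2 : ∑ i, (l i / c - 1) = 0 := by
      rw [Finset.sum_sub_distrib, ← Finset.sum_div, hsum]
      field_simp
      simp
    have hexp : ∏ i, l i / c = Real.exp (∑ i, Real.log (l i / c)) := by
      rw [Real.exp_sum]
      exact (Finset.prod_congr rfl fun i _ => (Real.exp_log (div_pos (hpos i) hc)).symm)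
    have hkey : ∑ i, Real.log (l i / c) ≤ 0 := by
      calc ∑ i, Real.log (l i / c) ≤ ∑ i, (l i / c - 1) := Finset.sum_le_sum fun i _ => hlog i
        _ = 0 := hsum2
    have hprodc : ∏ i, l i / c = (∏ i, l i) / c ^ m := by
      rw [Finset.prod_div_distrib, Finset.prod_const, Finset.card_univ, Fintype.card_fin]
    have hle : ∏ i, l i ≤ c ^ m := by
      have := (Real.exp_le_exp.mpr hkey).trans_eq Real.exp_zero
      rw [← hexp, hprodc, div_le_one (by positivity)] at this
      exact this
    refine ⟨hle, fun heq i => ?_⟩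
    have hz : ∑ i, Real.log (l i / c) = 0 := by
      have h1 : ∏ i, l i / c = 1 := by rw [hprodc, heq, div_self (by positivity)]
      rw [h1] at hexp
      exact (Real.exp_eq_one_iff _).mp hexp.symm
    have hall : ∀ i ∈ Finset.univ, Real.log (l i / c) = l i / c - 1 := by
      rw [← Finset.sum_eq_sum_iff_of_le (fun i _ => hlog i)]
      rw [hz, hsum2]
    by_contra hne
    have hd : l i / c ≠ 1 := by
      intro h1; exact hne (by field_simp at h1; linarith)
    exact absurd (hall i (Finset.mem_univ i))
      (ne_of_lt (Real.log_lt_sub_one_of_pos (div_pos (hpos i) hc) hd))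
  · push_neg at hpos
    obtain ⟨i, hi⟩ := hpos
    have hzero : l i = 0 := le_antisymm hi (h0 i)
    have hprod : ∏ j, l j = 0 := Finset.prod_eq_zero (Finset.mem_univ i) hzero
    rw [hprod]
    exact ⟨by positivity, fun h => absurd h.symm (by positivity)⟩

lemma roots_set_eq {n : ℕ} (hn : 0 < n) :
    {ζ : ℂ | ζ ^ n = 1} = ↑(Polynomial.nthRootsFinset n (1 : ℂ)) := by
  ext ζ
  simp [Polynomial.mem_nthRootsFinset hn (1 : ℂ)]

lemma card_roots {n : ℕ} (hn : 0 < n) : (Polynomial.nthRootsFinset n (1 : ℂ)).card = n :=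
  (Complex.isPrimitiveRoot_exp n hn.ne').card_nthRootsFinset

/-- A family of n distinct n-th roots of unity has range the full root set. -/
lemma range_eq_roots {n : ℕ} (hn : 0 < n) {z : Fin n → ℂ} (hinj : Function.Injective z)
    (hroot : ∀ i, z i ^ n = 1) : Set.range z = {ζ : ℂ | ζ ^ n = 1} := by
  have hsub : Finset.univ.image z ⊆ Polynomial.nthRootsFinset n (1 : ℂ) := by
    intro x hx
    obtain ⟨i, _, rfl⟩ := Finset.mem_image.mp hx
    exact (Polynomial.mem_nthRootsFinset hn (1 : ℂ)).mpr (hroot i)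
  have hcard : (Finset.univ.image z).card = n := by
    rw [Finset.card_image_of_injective _ hinj, Finset.card_univ, Fintype.card_fin]
  have := Finset.eq_of_subset_of_card_le hsub (by rw [hcard, card_roots hn])
  rw [roots_set_eq hn, ← this]
  simp [Finset.coe_image]

lemma inj_of_range {n : ℕ} (hn : 0 < n) {z : Fin n → ℂ} {w : ℂ} (hw : w ≠ 0)
    (hr : Set.range z = (fun ζ : ℂ => w * ζ) '' {ζ : ℂ | ζ ^ n = 1}) :
    Function.Injective z := by
  have h1 : Set.range z = ↑((Polynomial.nthRootsFinset n (1 : ℂ)).image (fun ζ => w * ζ)) := by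
    rw [hr, roots_set_eq hn, Finset.coe_image]
  have h2 : (Finset.univ.image z : Finset ℂ) = (Polynomial.nthRootsFinset n (1 : ℂ)).image (fun ζ => w * ζ) := by
    apply Finset.coe_injective
    rw [← h1]
    simp [Finset.coe_image]
  have h3 : (Finset.univ.image z).card = n := by
    rw [h2, Finset.card_image_of_injective _ (mul_right_injective₀ hw), card_roots hn]
  rw [← Set.injOn_univ, ← Finset.coe_univ]
  exact Finset.card_image_iff.mp (by rw [h3, Finset.card_univ, Fintype.card_fin])

/-- If all off-diagonal Gram entries vanish and |z i| = 1 then the product attains n^{n/2}. -/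
lemma P_eq_of_offdiag {n : ℕ} (hn : 2 ≤ n) {z : Fin n → ℂ} (hz : ∀ i, ‖z i‖ = 1)
    (hG : ∀ i j, i ≠ j → (vandermonde z * (vandermonde z)ᴴ) i j = 0) :
    (∏ p ∈ Finset.univ.filter (fun p : Fin n × Fin n => p.1 < p.2),
        ‖z p.1 - z p.2‖) = (n : ℝ) ^ ((n : ℝ) / 2) := by
  have hGeq : vandermonde z * (vandermonde z)ᴴ = ((n : ℝ) : ℂ) • 1 := by
    ext i j
    by_cases hij : i = j
    · subst hij
      rw [gram_entry]
      have h1 : z i * (starRingEnd ℂ) (z i) = 1 := by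
        rw [Complex.mul_conj]
        norm_cast
        rw [Complex.normSq_eq_norm_sq, hz i, one_pow]
      simp [h1]
    · rw [hG i j hij]
      simp [Matrix.one_apply_ne hij]
  have hdet : (vandermonde z * (vandermonde z)ᴴ).det = (((n : ℝ) ^ n : ℝ) : ℂ) := by
    rw [hGeq, Matrix.det_smul, Matrix.det_one, mul_one, Fintype.card_fin]
    push_cast
    ring
  have hP2 : ‖(vandermonde z).det‖ ^ 2 = (n : ℝ) ^ n := by
    have := (det_gram z).trans hdet
    exact_mod_cast this
  have hR2 : ((n : ℝ) ^ ((n : ℝ) / 2)) ^ 2 = (n : ℝ) ^ n := by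
    rw [← Real.rpow_natCast ((n : ℝ) ^ ((n : ℝ) / 2)) 2, ← Real.rpow_mul (by positivity)]
    norm_num
  rw [← absdet]
  have h0 : (0 : ℝ) ≤ ‖(vandermonde z).det‖ := norm_nonneg _
  have hRnn : (0:ℝ) ≤ (n : ℝ) ^ ((n : ℝ) / 2) := Real.rpow_nonneg (by positivity) _
  exact (sq_eq_sq₀ h0 hRnn).mp (hP2.trans hR2.symm)

/-- Main eigenvalue bound: upper bound and equality case. -/
lemma main_bound {n : ℕ} (hn : 2 ≤ n) {z : Fin n → ℂ} (hz : ∀ i, ‖z i‖ = 1) :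
    (∏ p ∈ Finset.univ.filter (fun p : Fin n × Fin n => p.1 < p.2),
        ‖z p.1 - z p.2‖) ≤ (n : ℝ) ^ ((n : ℝ) / 2) ∧
    ((∏ p ∈ Finset.univ.filter (fun p : Fin n × Fin n => p.1 < p.2),
        ‖z p.1 - z p.2‖) = (n : ℝ) ^ ((n : ℝ) / 2) →
      ∀ i j, i ≠ j → (vandermonde z * (vandermonde z)ᴴ) i j = 0) := by
  have hn0 : 0 < n := by omega
  set A := vandermonde z * (vandermonde z)ᴴ with hA
  have hps : A.PosSemidef := Matrix.posSemidef_self_mul_conjTranspose _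
  have hherm : A.IsHermitian := hps.isHermitian
  set l := hherm.eigenvalues with hl
  have hl0 : ∀ i, 0 ≤ l i := hps.eigenvalues_nonneg
  have htr : A.trace = (((n * n : ℝ)) : ℂ) := by
    rw [Matrix.trace]
    have hdiag : ∀ i, A.diag i = (n : ℂ) := by
      intro i
      show A i i = _
      rw [hA, gram_entry]
      have h1 : z i * (starRingEnd ℂ) (z i) = 1 := by
        rw [Complex.mul_conj]
        norm_cast
        rw [Complex.normSq_eq_norm_sq, hz i, one_pow]
      simp [h1]
    rw [Finset.sum_congr rfl (fun i _ => hdiag i)]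
    rw [Finset.sum_const, Finset.card_univ, Fintype.card_fin]
    push_cast
    ring
  have hsum : ∑ i, l i = n * n := by
    have h1 : ((∑ i, l i : ℝ) : ℂ) = (((n * n : ℝ)) : ℂ) := by
      rw [← htr, ← sum_eigen hherm]
      push_cast
      rfl
    exact_mod_cast h1
  have hprod : (∏ i, l i) = ‖(vandermonde z).det‖ ^ 2 := by
    have h1 : ((∏ i, l i : ℝ) : ℂ) = ((‖(vandermonde z).det‖ ^ 2 : ℝ) : ℂ) := by
      rw [det_gram z, ← hA, hherm.det_eq_prod_eigenvalues]
      push_cast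
      rfl
    exact_mod_cast h1
  obtain ⟨hle, heq⟩ := amgm (c := (n : ℝ)) (by positivity) l hl0 hsum
  have hR2 : ((n : ℝ) ^ ((n : ℝ) / 2)) ^ 2 = (n : ℝ) ^ n := by
    rw [← Real.rpow_natCast ((n : ℝ) ^ ((n : ℝ) / 2)) 2, ← Real.rpow_mul (by positivity)]
    norm_num
  have h0 : (0 : ℝ) ≤ ‖(vandermonde z).det‖ := norm_nonneg _
  have hRnn : (0:ℝ) ≤ (n : ℝ) ^ ((n : ℝ) / 2) := Real.rpow_nonneg (by positivity) _
  constructor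
  · rw [← absdet]
    have : ‖(vandermonde z).det‖ ^ 2 ≤ ((n : ℝ) ^ ((n : ℝ) / 2)) ^ 2 := by
      rw [hR2, ← hprod]; exact hle
    exact (pow_le_pow_iff_left₀ h0 hRnn two_ne_zero).mp this
  · intro hPeq i j hij
    rw [← absdet] at hPeq
    have hpe : ∏ i, l i = (n : ℝ) ^ n := by
      rw [hprod, hPeq, hR2]
    have hall := heq hpe
    have hGid : A = ((n : ℝ) : ℂ) • 1 := eq_smul_one hherm _ hall
    rw [hA] at hGid ⊢
    rw [hGid]
    simp [Matrix.one_apply_ne hij]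

end Stmt7Aux

open Stmt7Aux in
/-- On the unit circle, the maximum of `∏_{i<j} |zᵢ - zⱼ|` over `n`-tuples is `n^{n/2}`,
attained exactly on rotated copies of the `n`-th roots of unity. -/
theorem stmt_7 (n : ℕ) (hn : 2 ≤ n) :
    IsGreatest {r : ℝ | ∃ z : Fin n → ℂ, (∀ i, ‖z i‖ = 1) ∧
        r = ∏ p ∈ Finset.univ.filter (fun p : Fin n × Fin n => p.1 < p.2),
          ‖z p.1 - z p.2‖} ((n : ℝ) ^ ((n : ℝ) / 2)) ∧
    ∀ z : Fin n → ℂ, (∀ i, ‖z i‖ = 1) →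
      ((∏ p ∈ Finset.univ.filter (fun p : Fin n × Fin n => p.1 < p.2),
          ‖z p.1 - z p.2‖) = (n : ℝ) ^ ((n : ℝ) / 2) ↔
        ∃ w : ℂ, ‖w‖ = 1 ∧
          Set.range z = (fun ζ : ℂ => w * ζ) '' {ζ : ℂ | ζ ^ n = 1}) := by
  have hn0 : 0 < n := by omega
  -- converse direction as a lemma-in-proof
  have hconv : ∀ z : Fin n → ℂ, (∀ i, ‖z i‖ = 1) →
      (∃ w : ℂ, ‖w‖ = 1 ∧
        Set.range z = (fun ζ : ℂ => w * ζ) '' {ζ : ℂ | ζ ^ n = 1}) →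
      (∏ p ∈ Finset.univ.filter (fun p : Fin n × Fin n => p.1 < p.2),
          ‖z p.1 - z p.2‖) = (n : ℝ) ^ ((n : ℝ) / 2) := by
    intro z hz ⟨w, hw, hr⟩
    have hw0 : w ≠ 0 := by
      intro h; rw [h] at hw; simp at hw
    have hinj : Function.Injective z := inj_of_range hn0 hw0 hr
    apply P_eq_of_offdiag hn hz
    intro i j hij
    rw [gram_entry]
    rw [geom_iff hn0]
    have hzn : ∀ i, z i ^ n = w ^ n := by
      intro i
      have : z i ∈ Set.range z := Set.mem_range_self i
      rw [hr] at this
      obtain ⟨ζ, hζ, hzi⟩ := this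
      rw [← hzi, mul_pow, hζ, mul_one]
    constructor
    · intro h1
      apply hij
      apply hinj
      have h2 : z i * (starRingEnd ℂ) (z j) * z j = z j := by rw [h1, one_mul]
      have h3 : (starRingEnd ℂ) (z j) * z j = 1 := by
        rw [mul_comm, Complex.mul_conj]
        norm_cast
        rw [Complex.normSq_eq_norm_sq, hz j, one_pow]
      calc z i = z i * ((starRingEnd ℂ) (z j) * z j) := by rw [h3, mul_one]
        _ = z j := by rw [← mul_assoc]; exact h2
    · rw [mul_pow, ← map_pow, hzn i, hzn j, Complex.mul_conj]
      norm_cast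
      rw [Complex.normSq_eq_norm_sq, norm_pow, hw, one_pow, one_pow]
  constructor
  · constructor
    · -- membership: roots of unity achieve the value
      have hprim : IsPrimitiveRoot (Complex.exp (2 * Real.pi * Complex.I / n)) n :=
        Complex.isPrimitiveRoot_exp n hn0.ne'
      obtain ⟨e, hprim⟩ : ∃ e : ℂ, IsPrimitiveRoot e n := ⟨_, hprim⟩
      have habs : ‖e‖ = 1 := by
        have h1 : ‖e‖ ^ n = 1 := by
          rw [← norm_pow, hprim.pow_eq_one]
          exact norm_one
        have h2 : (0:ℝ) ≤ ‖e‖ := norm_nonneg e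
        by_contra hne
        rcases lt_or_gt_of_ne hne with h | h
        · have := pow_lt_one₀ h2 h hn0.ne'
          rw [h1] at this
          exact lt_irrefl _ this
        · have := one_lt_pow₀ h hn0.ne'
          rw [h1] at this
          exact lt_irrefl _ this
      have hz' : ∀ i : Fin n, ‖e ^ (i : ℕ)‖ = 1 := fun i => by
        rw [norm_pow, habs, one_pow]
      have hinj : Function.Injective (fun i : Fin n => e ^ (i : ℕ)) := by
        intro i j h
        exact Fin.ext (hprim.pow_inj i.isLt j.isLt h)
      have hroot : ∀ i : Fin n, (e ^ (i : ℕ)) ^ n = 1 := by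
        intro i
        rw [← pow_mul, mul_comm, pow_mul, hprim.pow_eq_one, one_pow]
      have hrange : Set.range (fun i : Fin n => e ^ (i : ℕ))
          = (fun ζ : ℂ => (1:ℂ) * ζ) '' {ζ : ℂ | ζ ^ n = 1} := by
        rw [range_eq_roots hn0 hinj hroot]
        simp
      exact ⟨fun i => e ^ (i : ℕ), hz',
        (hconv (fun i => e ^ (i : ℕ)) hz' ⟨1, by simp, hrange⟩).symm⟩
    · -- upper bound
      rintro r ⟨z, hz, rfl⟩
      exact (main_bound hn hz).1
  · intro z hz
    constructor
    · intro hPeq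
      have hG := (main_bound hn hz).2 hPeq
      -- injectivity of z
      have hinj : Function.Injective z := by
        intro i j hij
        by_contra hne
        have h := hG i j (fun h => hne h)
        rw [gram_entry, geom_iff hn0] at h
        apply h.1
        rw [hij, Complex.mul_conj]
        norm_cast
        rw [Complex.normSq_eq_norm_sq, hz j, one_pow]
      set i0 : Fin n := ⟨0, hn0⟩ with hi0
      set w0 : ℂ := z i0 with hw0
      have hconj1 : (starRingEnd ℂ) w0 * w0 = 1 := by
        rw [mul_comm, Complex.mul_conj]
        norm_cast
        rw [Complex.normSq_eq_norm_sq, hz i0, one_pow]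
      refine ⟨w0, hz i0, ?_⟩
      set ζ : Fin n → ℂ := fun i => (starRingEnd ℂ) w0 * z i with hζ
      have hζinj : Function.Injective ζ := by
        intro i j h
        apply hinj
        have hc0 : (starRingEnd ℂ) w0 ≠ 0 := by
          intro hcc
          have : w0 ≠ 0 := by
            intro h0; rw [h0] at hw0; have := hz i0; rw [← hw0] at this
            simp [h0] at this
          exact this (by simpa using congrArg (starRingEnd ℂ) hcc)
        exact mul_left_cancel₀ hc0 h
      have hζroot : ∀ i, ζ i ^ n = 1 := by
        intro i
        by_cases hii : i = i0
        · rw [hii, hζ]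
          simp only
          rw [hconj1, one_pow]
        · have h := hG i i0 hii
          rw [gram_entry, geom_iff hn0] at h
          have h2 := h.2
          rw [hζ]
          simp only
          rw [mul_pow, ← map_pow] at h2 ⊢
          rw [hw0, mul_comm]
          exact h2
      have hrange : Set.range ζ = {x : ℂ | x ^ n = 1} := range_eq_roots hn0 hζinj hζroot
      have hzi : ∀ i, z i = w0 * ζ i := by
        intro i
        rw [hζ]
        simp only
        rw [← mul_assoc, mul_comm w0, hconj1, one_mul]
      rw [← hrange]
      have : z = fun i => w0 * ζ i := funext hzi
      rw [this, ← Set.range_comp]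
      rfl
    · exact hconv z hz
end

section
/- Equioscillation implies optimality: if P is a monic real polynomial of degree n and there exist n+1 points a ≤ x_0 < x_1 < ⋯ < x_n ≤ b such that P(x_i) = ±(-1)^i ‖P‖_{[a,b]} (alternating signs) with |P(x_i)| = ‖P‖_{[a,b]}, then P minimizes ‖Q‖_{[a,b]} among all monic real polynomials Q of degree n. -/
open Polynomial

/-- Equioscillation implies optimality: if a monic real polynomial `P` of degree `n`
attains `±‖P‖_{[a,b]}` with alternating signs at `n+1` points of `[a,b]`, then `P`
minimizes the sup-norm on `[a,b]` among monic real polynomials of degree `n`. -/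
theorem stmt_14 (a b : ℝ) (hab : a < b) (n : ℕ) (P : Polynomial ℝ)
    (hmonic : P.Monic) (hdeg : P.natDegree = n)
    (x : Fin (n + 1) → ℝ) (hx : StrictMono x)
    (ha : a ≤ x 0) (hb : x (Fin.last n) ≤ b)
    (ε : ℝ) (hε : ε = 1 ∨ ε = -1)
    (hosc : ∀ i : Fin (n + 1), P.eval (x i) =
      ε * (-1 : ℝ) ^ (i : ℕ) * sSup ((fun s => |P.eval s|) '' Set.Icc a b)) :
    ∀ Q : Polynomial ℝ, Q.Monic → Q.natDegree = n →
      sSup ((fun s => |P.eval s|) '' Set.Icc a b) ≤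
        sSup ((fun s => |Q.eval s|) '' Set.Icc a b) := by
  intro Q hQm hQd
  by_contra hcon
  push_neg at hcon
  set M := sSup ((fun s => |P.eval s|) '' Set.Icc a b) with hM
  set N := sSup ((fun s => |Q.eval s|) '' Set.Icc a b) with hN
  -- membership of the points in [a,b]
  have hxmem : ∀ i : Fin (n + 1), x i ∈ Set.Icc a b := by
    intro i
    exact ⟨le_trans ha (hx.monotone (Fin.zero_le i)),
      le_trans (hx.monotone (Fin.le_last i)) hb⟩
  have hbddQ : BddAbove ((fun s => |Q.eval s|) '' Set.Icc a b) :=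
    (isCompact_Icc.image ((Q.continuous_aeval).abs)).bddAbove
  have hQle : ∀ i : Fin (n + 1), |Q.eval (x i)| ≤ N := by
    intro i
    exact le_csSup hbddQ ⟨x i, hxmem i, rfl⟩
  set D := P - Q with hD
  -- key positivity
  have hpos : ∀ i : Fin (n + 1), 0 < ε * (-1 : ℝ) ^ (i : ℕ) * D.eval (x i) := by
    intro i
    have h1 := hosc i
    have h2 := hQle i
    have hu : |ε * (-1 : ℝ) ^ (i : ℕ)| = 1 := by
      rcases hε with h | h <;> subst h <;>
        simp [abs_mul, abs_pow]
    have hu2 : (ε * (-1 : ℝ) ^ (i : ℕ)) ^ 2 = 1 := by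
      rw [← sq_abs, hu]; norm_num
    have hle : ε * (-1 : ℝ) ^ (i : ℕ) * Q.eval (x i) ≤ |Q.eval (x i)| := by
      calc ε * (-1 : ℝ) ^ (i : ℕ) * Q.eval (x i)
          ≤ |ε * (-1 : ℝ) ^ (i : ℕ) * Q.eval (x i)| := le_abs_self _
        _ = |Q.eval (x i)| := by rw [abs_mul, hu, one_mul]
    have hDe : D.eval (x i) = P.eval (x i) - Q.eval (x i) := by
      simp [hD]
    rw [hDe, h1]
    have hexp : ε * (-1 : ℝ) ^ (i : ℕ) * (ε * (-1 : ℝ) ^ (i : ℕ) * M - Q.eval (x i)) =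
        (ε * (-1 : ℝ) ^ (i : ℕ)) ^ 2 * M - ε * (-1 : ℝ) ^ (i : ℕ) * Q.eval (x i) := by ring
    rw [hexp, hu2, one_mul]
    linarith
  have hD0 : D ≠ 0 := by
    intro h
    have := hpos 0
    rw [h] at this
    simp at this
  -- degree bound
  have hPne : P ≠ 0 := hmonic.ne_zero
  have hQne : Q ≠ 0 := hQm.ne_zero
  have hdlt : D.natDegree < n := by
    have hdd : P.degree = Q.degree := by
      rw [degree_eq_natDegree hPne, degree_eq_natDegree hQne, hdeg, hQd]
    have := degree_sub_lt hdd hPne (by rw [hmonic.leadingCoeff, hQm.leadingCoeff])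
    rw [degree_eq_natDegree hPne, hdeg] at this
    exact (natDegree_lt_iff_degree_lt hD0).mpr this
  -- sign changes give roots
  have hroot : ∀ i : Fin n, ∃ z ∈ Set.Ioo (x i.castSucc) (x i.succ), D.eval z = 0 := by
    intro i
    have hcd : x i.castSucc < x i.succ := hx Fin.castSucc_lt_succ
    have h1 := hpos i.castSucc
    have h2 := hpos i.succ
    have hcast : ((i.castSucc : Fin (n+1)) : ℕ) = (i : ℕ) := rfl
    have hsucc : ((i.succ : Fin (n+1)) : ℕ) = (i : ℕ) + 1 := rfl
    rw [hcast] at h1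
    rw [hsucc, pow_succ] at h2
    have hu : |ε * (-1 : ℝ) ^ (i : ℕ)| = 1 := by
      rcases hε with h | h <;> subst h <;> simp [abs_mul, abs_pow]
    have hu2 : (ε * (-1 : ℝ) ^ (i : ℕ)) ^ 2 = 1 := by
      rw [← sq_abs, hu]; norm_num
    have hprod := mul_pos h1 h2
    have hexp : ε * (-1 : ℝ) ^ (i : ℕ) * D.eval (x i.castSucc) *
        (ε * ((-1 : ℝ) ^ (i : ℕ) * -1) * D.eval (x i.succ)) =
        -((ε * (-1 : ℝ) ^ (i : ℕ)) ^ 2 * (D.eval (x i.castSucc) * D.eval (x i.succ))) := by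
      ring
    rw [hexp, hu2, one_mul] at hprod
    have hneg : D.eval (x i.castSucc) * D.eval (x i.succ) < 0 := by linarith
    have hcont : ContinuousOn (fun t => D.eval t) (Set.Icc (x i.castSucc) (x i.succ)) :=
      (D.continuous_aeval).continuousOn
    rcases mul_neg_iff.mp hneg with ⟨hp, hq⟩ | ⟨hp, hq⟩
    · have : (0 : ℝ) ∈ Set.Ioo (D.eval (x i.succ)) (D.eval (x i.castSucc)) := ⟨hq, hp⟩
      have := intermediate_value_Ioo' hcd.le hcont this
      rcases this with ⟨z, hz, hz0⟩
      exact ⟨z, hz, hz0⟩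
    · have : (0 : ℝ) ∈ Set.Ioo (D.eval (x i.castSucc)) (D.eval (x i.succ)) := ⟨hp, hq⟩
      have := intermediate_value_Ioo hcd.le hcont this
      rcases this with ⟨z, hz, hz0⟩
      exact ⟨z, hz, hz0⟩
  choose y hy hy0 using hroot
  have hymono : StrictMono y := by
    intro i j hij
    calc y i < x i.succ := (hy i).2
      _ ≤ x j.castSucc := hx.monotone (by
          have := Fin.lt_def.mp hij
          rw [Fin.le_def]
          simp only [Fin.val_succ, Fin.coe_castSucc]
          omega)
      _ < y j := (hy j).1
  -- count roots
  have hsub : Finset.image y Finset.univ ⊆ D.roots.toFinset := by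
    intro z hz
    rcases Finset.mem_image.mp hz with ⟨i, _, rfl⟩
    rw [Multiset.mem_toFinset, mem_roots hD0]
    exact hy0 i
  have hcard : n ≤ D.natDegree := by
    calc n = (Finset.image y Finset.univ).card := by
          rw [Finset.card_image_of_injective _ hymono.injective, Finset.card_univ,
            Fintype.card_fin]
      _ ≤ D.roots.toFinset.card := Finset.card_le_card hsub
      _ ≤ Multiset.card D.roots := D.roots.toFinset_card_le
      _ ≤ D.natDegree := D.card_roots'
  omega
end

section
/- For 0 ≤ b < a, the Chebyshev constant of E = [-a,-b] ∪ [b,a] equals √(a²-b²)/2; in particular t_{2k}(E) = 2((a²-b²)/4)^k for every k ≥ 1. -/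
open Polynomial

lemma alt_roots (D : ℝ[X]) (N : ℕ) (w : ℕ → ℝ) (hw : ∀ i, i < N → w i < w (i+1))
    (hs : ∀ i, i ≤ N → 0 < (-1)^i * D.eval (w i)) : N ≤ D.natDegree := by
  rcases Nat.eq_zero_or_pos N with h | hN
  · omega
  have hD0 : D ≠ 0 := by
    intro h; have := hs 0 (by omega); simp [h] at this
  have hmono : ∀ j i, i < j → j ≤ N → w i < w j := by
    intro j
    induction j with
    | zero => omega
    | succ j ih =>
      intro i hi hj
      rcases Nat.lt_succ_iff_lt_or_eq.mp hi with h | h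
      · exact lt_trans (ih i h (by omega)) (hw j (by omega))
      · subst h; exact hw i (by omega)
  have hroot : ∀ i : Fin N, ∃ x, x ∈ Set.Ioo (w i) (w (i+1)) ∧ D.eval x = 0 := by
    intro ⟨i, hi⟩
    have h1 := hs i (by omega)
    have h2 := hs (i+1) (by omega)
    have hle : w i ≤ w (i+1) := le_of_lt (hw i hi)
    have hcont : ContinuousOn (fun x => D.eval x) (Set.Icc (w i) (w (i+1))) :=
      (Polynomial.continuous D).continuousOn
    rcases Nat.even_or_odd i with he | ho
    · rw [he.neg_one_pow] at h1
      rw [pow_succ, he.neg_one_pow] at h2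
      have h2' : D.eval (w (i+1)) < 0 := by nlinarith
      have : (0:ℝ) ∈ Set.Ioo (D.eval (w (i+1))) (D.eval (w i)) := ⟨h2', by linarith⟩
      obtain ⟨x, hx, hx0⟩ := intermediate_value_Ioo' hle hcont this
      exact ⟨x, hx, hx0⟩
    · rw [ho.neg_one_pow] at h1
      rw [pow_succ, ho.neg_one_pow] at h2
      have h1' : D.eval (w i) < 0 := by nlinarith
      have h2' : 0 < D.eval (w (i+1)) := by nlinarith
      have : (0:ℝ) ∈ Set.Ioo (D.eval (w i)) (D.eval (w (i+1))) := ⟨h1', h2'⟩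
      obtain ⟨x, hx, hx0⟩ := intermediate_value_Ioo hle hcont this
      exact ⟨x, hx, hx0⟩
  choose r hr hr0 using hroot
  have hrmono : StrictMono r := by
    intro i j hij
    have h1 : r i < w (i+1) := (hr i).2
    have h2 : w j < r j := (hr j).1
    have h3 : w ((i:ℕ)+1) ≤ w j := by
      rcases Nat.lt_or_ge ((i:ℕ)+1) j with h | h
      · exact le_of_lt (hmono j (i+1) h (by omega))
      · have : ((i:ℕ)+1) = (j:ℕ) := by omega
        rw [this]
    calc r i < w (i+1) := h1
      _ ≤ w j := h3
      _ < r j := h2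
  have hsub : Finset.image r Finset.univ ⊆ D.roots.toFinset := by
    intro x hx
    simp only [Finset.mem_image] at hx
    obtain ⟨i, _, rfl⟩ := hx
    simp [Multiset.mem_toFinset, mem_roots, hD0, hr0 i]
  have hcard : (Finset.image r Finset.univ).card = N := by
    rw [Finset.card_image_of_injective _ hrmono.injective, Finset.card_univ, Fintype.card_fin]
  calc N = (Finset.image r Finset.univ).card := hcard.symm
    _ ≤ D.roots.toFinset.card := Finset.card_le_card hsub
    _ ≤ Multiset.card D.roots := Multiset.toFinset_card_le _
    _ ≤ D.natDegree := D.card_roots'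


lemma chebT_aux : ∀ n : ℕ, (Chebyshev.T ℝ n).natDegree ≤ n ∧
    (Chebyshev.T ℝ n).coeff n = if n = 0 then 1 else 2^(n-1)
  | 0 => by simp [Chebyshev.T_zero]
  | 1 => by simp [Chebyshev.T_one]
  | (n+2) => by
      obtain ⟨h1d, h1c⟩ := chebT_aux n
      obtain ⟨h2d, h2c⟩ := chebT_aux (n+1)
      have hrec : Chebyshev.T ℝ ((n:ℤ)+2) = 2 * X * Chebyshev.T ℝ ((n:ℤ)+1) - Chebyshev.T ℝ n :=
        Chebyshev.T_add_two ℝ n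
      have hcast : ((n+2 : ℕ) : ℤ) = (n:ℤ) + 2 := by push_cast; ring
      have hcast1 : ((n+1 : ℕ) : ℤ) = (n:ℤ) + 1 := by push_cast; ring
      rw [hcast1] at h2d h2c
      rw [hcast, hrec]
      have hC2 : (Polynomial.C (2:ℝ)) = (2 : ℝ[X]) := map_ofNat Polynomial.C 2
      have hX : (2 * X * Chebyshev.T ℝ ((n:ℤ)+1)) = Polynomial.C 2 * (X * Chebyshev.T ℝ ((n:ℤ)+1)) := by
        rw [hC2, mul_assoc]
      constructor
      · apply le_trans (natDegree_sub_le _ _)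
        apply max_le
        · rw [hX]
          refine le_trans (natDegree_mul_le) ?_
          have h3 : (X * Chebyshev.T ℝ ((n:ℤ)+1)).natDegree ≤ 1 + (n+1) :=
            le_trans (natDegree_mul_le) (by simp; omega)
          simp
          omega
        · omega
      · rw [coeff_sub, Polynomial.coeff_eq_zero_of_natDegree_lt (by omega : (Chebyshev.T ℝ (n:ℤ)).natDegree < n+2),
          hX, coeff_C_mul, coeff_X_mul, h2c]
        simp [pow_succ]
        ring

lemma chebT_deg {k : ℕ} (hk : 1 ≤ k) : (Chebyshev.T ℝ k).natDegree = k ∧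
    (Chebyshev.T ℝ k).leadingCoeff = 2^(k-1) := by
  obtain ⟨hd, hc⟩ := chebT_aux k
  rw [if_neg (by omega)] at hc
  have hne : (Chebyshev.T ℝ k).coeff k ≠ 0 := by rw [hc]; positivity
  have hdeg : (Chebyshev.T ℝ k).natDegree = k := le_antisymm hd (le_natDegree_of_ne_zero hne)
  exact ⟨hdeg, by rw [Polynomial.leadingCoeff, hdeg, hc]⟩

lemma chebT_abs_le {k : ℕ} {y : ℝ} (h1 : -1 ≤ y) (h2 : y ≤ 1) :
    |(Chebyshev.T ℝ k).eval y| ≤ 1 := by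
  have := Real.cos_arccos h1 h2
  rw [← this, Chebyshev.T_real_cos]
  exact Real.abs_cos_le_one _

lemma chebT_cos (k : ℕ) (θ : ℝ) : (Chebyshev.T ℝ k).eval (Real.cos θ) = Real.cos (k * θ) := by
  simpa using Chebyshev.T_real_cos θ (k : ℤ)

section Key

variable {a b : ℝ} {k : ℕ}

/-- the monic extremal polynomial on `[-a,-b] ∪ [b,a]` of degree `2k` -/
noncomputable def Cpoly (a b : ℝ) (k : ℕ) : ℝ[X] :=
  Polynomial.C (2*((a^2-b^2)/4)^k) *
    ((Chebyshev.T ℝ k).comp (Polynomial.C (2/(a^2-b^2)) * X^2 + Polynomial.C (-(a^2+b^2)/(a^2-b^2))))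

lemma Cpoly_eval (hs : a^2 - b^2 ≠ 0) (x : ℝ) :
    (Cpoly a b k).eval x = 2*((a^2-b^2)/4)^k *
      (Chebyshev.T ℝ k).eval ((2*x^2 - (a^2+b^2))/(a^2-b^2)) := by
  simp only [Cpoly, eval_mul, eval_C, eval_comp, eval_add, eval_pow, eval_X]
  congr 2
  field_simp
  ring

lemma Cpoly_monic (hb : 0 ≤ b) (hab : b < a) (hk : 1 ≤ k) :
    (Cpoly a b k).Monic ∧ (Cpoly a b k).natDegree = 2*k := by
  have hs : (0:ℝ) < a^2 - b^2 := by nlinarith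
  obtain ⟨hTd, hTc⟩ := chebT_deg (k := k) hk
  set q : ℝ[X] := Polynomial.C (2/(a^2-b^2)) * X^2 + Polynomial.C (-(a^2+b^2)/(a^2-b^2)) with hq
  have hc2 : (2/(a^2-b^2)) ≠ 0 := by positivity
  have hqd : q.natDegree = 2 := by
    rw [hq]
    compute_degree!
    positivity
  have hqlc : q.leadingCoeff = 2/(a^2-b^2) := by
    rw [hq, Polynomial.leadingCoeff, hqd]
    simp [coeff_C]
  have hcompd : ((Chebyshev.T ℝ k).comp q).natDegree = 2*k := by
    rw [natDegree_comp, hTd, hqd]; ring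
  have hcomplc : ((Chebyshev.T ℝ k).comp q).leadingCoeff = 2^(k-1) * (2/(a^2-b^2))^k := by
    rw [leadingCoeff_comp (by omega), hTc, hqlc, hTd]
  have hlc : (Cpoly a b k).leadingCoeff = 1 := by
    rw [Cpoly, ← hq, Polynomial.leadingCoeff_mul, Polynomial.leadingCoeff_C, hcomplc]
    have h2 : (2:ℝ) * 2^(k-1) = 2^k := by
      rw [← pow_succ']
      congr 1
      omega
    have : ((a^2-b^2)/4)^k * (2/(a^2-b^2))^k = (1/2)^k := by
      rw [← mul_pow]
      congr 1
      field_simp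
      ring
    calc 2*((a^2-b^2)/4)^k * (2^(k-1) * (2/(a^2-b^2))^k)
        = (2*2^(k-1)) * (((a^2-b^2)/4)^k * (2/(a^2-b^2))^k) := by ring
      _ = 2^k * (1/2)^k := by rw [h2, this]
      _ = 1 := by rw [← mul_pow]; norm_num
  have hmonic : (Cpoly a b k).Monic := hlc
  refine ⟨hmonic, ?_⟩
  rw [Cpoly, ← hq, natDegree_C_mul (by positivity), hcompd]

end Key

section Key
variable {a b : ℝ} {k : ℕ}

lemma abs_mem_of_mem_E (hb : 0 ≤ b) {x : ℝ} (hx : x ∈ Set.Icc (-a) (-b) ∪ Set.Icc b a) :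
    b ≤ |x| ∧ |x| ≤ a := by
  rcases hx with ⟨h1, h2⟩ | ⟨h1, h2⟩
  · rw [abs_of_nonpos (by linarith)]; constructor <;> linarith
  · rw [abs_of_nonneg (by linarith)]; exact ⟨h1, h2⟩

lemma Cpoly_bound (hb : 0 ≤ b) (hab : b < a) (hk : 1 ≤ k) :
    IsGreatest ((fun x => |(Cpoly a b k).eval x|) '' (Set.Icc (-a) (-b) ∪ Set.Icc b a))
      (2*((a^2-b^2)/4)^k) := by
  have hs : (0:ℝ) < a^2 - b^2 := by nlinarith
  have hm : (0:ℝ) < 2*((a^2-b^2)/4)^k := by positivity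
  constructor
  · refine ⟨a, Or.inr ⟨le_of_lt hab, le_refl a⟩, ?_⟩
    show |(Cpoly a b k).eval a| = 2*((a^2-b^2)/4)^k
    rw [Cpoly_eval (ne_of_gt hs)]
    have h1 : (2*a^2 - (a^2+b^2))/(a^2-b^2) = 1 := by field_simp; ring
    have h2 : (Chebyshev.T ℝ k).eval 1 = 1 := by
      have := chebT_cos k 0
      simpa using this
    rw [h1, h2, mul_one, abs_of_pos hm]
  · rintro r ⟨x, hx, rfl⟩
    obtain ⟨hbx, hxa⟩ := abs_mem_of_mem_E hb hx
    have hx2 : b^2 ≤ x^2 ∧ x^2 ≤ a^2 :=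
      ⟨by nlinarith [abs_nonneg x, sq_abs x], by nlinarith [abs_nonneg x, sq_abs x]⟩
    set u := (2*x^2 - (a^2+b^2))/(a^2-b^2) with hu
    have hu1 : -1 ≤ u := by rw [hu, le_div_iff₀ hs]; nlinarith [hx2.1]
    have hu2 : u ≤ 1 := by rw [hu, div_le_one hs]; nlinarith [hx2.2]
    show |(Cpoly a b k).eval x| ≤ 2*((a^2-b^2)/4)^k
    rw [Cpoly_eval (ne_of_gt hs), abs_mul, abs_of_pos hm]
    calc 2*((a^2-b^2)/4)^k * |(Chebyshev.T ℝ k).eval u|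
        ≤ 2*((a^2-b^2)/4)^k * 1 := by
          apply mul_le_mul_of_nonneg_left (chebT_abs_le hu1 hu2) (le_of_lt hm)
      _ = 2*((a^2-b^2)/4)^k := mul_one _

lemma neg_one_pow_sub_eq {k i : ℕ} (hi : i ≤ 2*k) : ((-1:ℝ))^(2*k-i) = (-1)^i := by
  rcases Nat.even_or_odd i with h | h
  · rw [h.neg_one_pow, (Nat.even_sub hi).mpr (iff_of_true (even_two_mul k) h) |>.neg_one_pow]
  · have hodd : Odd (2*k - i) := by
      rcases Nat.even_or_odd (2*k - i) with h2 | h2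
      · exfalso
        have := (Nat.even_sub hi).mp h2
        have : Even i := this.mp (even_two_mul k)
        exact (Nat.not_odd_iff_even.mpr this) h
      · exact h2
    rw [h.neg_one_pow, hodd.neg_one_pow]

open Real in
lemma Cpoly_lower (hb : 0 ≤ b) (hab : b < a) (hk : 1 ≤ k) (P : ℝ[X]) (hP : P.Monic)
    (hPd : P.natDegree = 2*k) :
    ∃ x ∈ Set.Icc (-a) (-b) ∪ Set.Icc b a, 2*((a^2-b^2)/4)^k ≤ |P.eval x| := by
  by_contra hcon
  push_neg at hcon
  set s := a^2 - b^2 with hsdef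
  have hs : (0:ℝ) < s := by nlinarith
  set m := 2*(s/4)^k with hm
  have hm0 : 0 < m := by positivity
  set θ : ℕ → ℝ := fun j => j*π/k with hθ
  set xx : ℕ → ℝ := fun j => Real.sqrt (((a^2+b^2) + s*Real.cos (θ j))/2) with hxx
  have hθmem : ∀ j ≤ k, θ j ∈ Set.Icc (0:ℝ) π := by
    intro j hj
    constructor
    · apply div_nonneg (by positivity) (by positivity)
    · rw [div_le_iff₀ (by positivity : (0:ℝ) < (k:ℝ))]
      have : (j:ℝ) ≤ k := by exact_mod_cast hj
      nlinarith [pi_pos]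
  have hymem : ∀ j, b^2 ≤ ((a^2+b^2) + s*Real.cos (θ j))/2 ∧
      ((a^2+b^2) + s*Real.cos (θ j))/2 ≤ a^2 := by
    intro j
    have h1 := Real.neg_one_le_cos (θ j)
    have h2 := Real.cos_le_one (θ j)
    constructor <;> nlinarith
  have hxsq : ∀ j, (xx j)^2 = ((a^2+b^2) + s*Real.cos (θ j))/2 := by
    intro j
    exact Real.sq_sqrt (le_trans (by positivity) (hymem j).1)
  have hxmem : ∀ j, b ≤ xx j ∧ xx j ≤ a := by
    intro j
    constructor
    · have : b = Real.sqrt (b^2) := (Real.sqrt_sq hb).symm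
      rw [this]
      exact Real.sqrt_le_sqrt (hymem j).1
    · have : a = Real.sqrt (a^2) := (Real.sqrt_sq (by linarith)).symm
      rw [this]
      exact Real.sqrt_le_sqrt (hymem j).2
  have hxdec : ∀ i j, i < j → j ≤ k → xx j < xx i := by
    intro i j hij hjk
    have hθij : θ i < θ j := by
      rw [hθ]
      have hi : (i:ℝ) < j := by exact_mod_cast hij
      have hkpos : (0:ℝ) < k := by exact_mod_cast hk
      apply div_lt_div_of_pos_right ?_ hkpos
      nlinarith [Real.pi_pos]
    have hcos : Real.cos (θ j) < Real.cos (θ i) :=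
      Real.strictAntiOn_cos (hθmem i (by omega)) (hθmem j hjk) hθij
    rw [hxx]
    apply Real.sqrt_lt_sqrt (le_trans (by positivity) (hymem j).1)
    nlinarith
  -- value of Cpoly at ± xx j
  have hCval : ∀ j ≤ k, ∀ ε : ℝ, ε = 1 ∨ ε = -1 →
      (Cpoly a b k).eval (ε * xx j) = m * (-1)^j := by
    intro j hj ε hε
    rw [Cpoly_eval (ne_of_gt hs)]
    have hsq : (ε * xx j)^2 = (xx j)^2 := by rcases hε with rfl | rfl <;> ring
    have harg : (2*(ε * xx j)^2 - (a^2+b^2))/(a^2-b^2) = Real.cos (θ j) := by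
      rw [hsq, hxsq j]
      rw [← hsdef, mul_div_cancel₀ _ (two_ne_zero), add_sub_cancel_left, mul_div_cancel_left₀ _ (ne_of_gt hs)]
    rw [harg, chebT_cos k (θ j)]
    have hkne : (k:ℝ) ≠ 0 := by
      have : (0:ℝ) < k := by exact_mod_cast hk
      linarith
    have : (k:ℝ) * θ j = j * π := by
      rw [hθ]
      field_simp
    rw [this]
    have := Real.cos_nat_mul_pi_sub 0 j
    simp only [sub_zero, Real.cos_zero, mul_one] at this
    rw [this, hm, hsdef]
  -- the difference polynomial
  set D : ℝ[X] := Cpoly a b k - P with hD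
  obtain ⟨hCm, hCd⟩ := Cpoly_monic hb hab hk
  have hDdeg : D.natDegree < 2*k := by
    have hDne : D.degree < (2*k : ℕ) := by
      rw [(Polynomial.degree_lt_iff_coeff_zero _ _)]
      intro i hi
      have hi' : (2*k : ℕ) ≤ i := by exact_mod_cast hi
      rw [hD, coeff_sub]
      rcases eq_or_lt_of_le hi' with h | h
      · rw [← h]
        have h1 : (Cpoly a b k).coeff (2*k) = 1 := by
          have := hCm.coeff_natDegree
          rwa [hCd] at this
        have h2 : P.coeff (2*k) = 1 := by
          have := hP.coeff_natDegree
          rwa [hPd] at this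
        rw [h1, h2, sub_self]
      · rw [coeff_eq_zero_of_natDegree_lt (by omega : (Cpoly a b k).natDegree < i),
          coeff_eq_zero_of_natDegree_lt (by omega : P.natDegree < i), sub_self]
    rcases eq_or_ne D 0 with h0 | h0
    · exfalso
      have hPC : Cpoly a b k = P := by rwa [sub_eq_zero] at h0
      have hmem0 : xx 0 ∈ Set.Icc (-a) (-b) ∪ Set.Icc b a :=
        Or.inr ⟨(hxmem 0).1, (hxmem 0).2⟩
      have hlt0 := hcon (xx 0) hmem0
      have hval := hCval 0 (by omega) 1 (Or.inl rfl)
      simp only [pow_zero, mul_one, one_mul] at hval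
      rw [← hPC, hval, abs_of_pos hm0] at hlt0
      exact lt_irrefl m hlt0
    · have := (Polynomial.natDegree_lt_iff_degree_lt h0).mpr hDne
      exact_mod_cast this
  -- alternation points
  set w : ℕ → ℝ := fun i => if i ≤ k then -(xx i) else xx (2*k - i) with hw
  have hwE : ∀ i ≤ 2*k, w i ∈ Set.Icc (-a) (-b) ∪ Set.Icc b a := by
    intro i hi
    simp only [hw]
    split_ifs with h
    · exact Or.inl ⟨by simpa using (hxmem i).2, by simpa using (hxmem i).1⟩
    · exact Or.inr ⟨(hxmem _).1, (hxmem _).2⟩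
  have hCw : ∀ i ≤ 2*k, (Cpoly a b k).eval (w i) = m * (-1)^i := by
    intro i hi
    simp only [hw]
    split_ifs with h
    · have := hCval i h (-1) (Or.inr rfl)
      rw [neg_one_mul] at this
      exact this
    · have h2 : 2*k - i ≤ k := by omega
      have := hCval (2*k-i) h2 1 (Or.inl rfl)
      rw [one_mul] at this
      rw [this, neg_one_pow_sub_eq hi]
  have hwmono : ∀ i, i < 2*k → w i < w (i+1) := by
    intro i hi
    simp only [hw]
    split_ifs with h1 h2 h2
    · have := hxdec i (i+1) (by omega) h2
      linarith
    · have hik : i = k := by omega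
      rw [hik]
      have hidx : 2*k - (k+1) = k-1 := by omega
      rw [hidx]
      have hdec := hxdec (k-1) k (by omega) (le_refl k)
      have h0 : 0 ≤ xx k := by simp only [hxx]; exact Real.sqrt_nonneg _
      linarith
    · omega
    · have := hxdec (2*k - (i+1)) (2*k - i) (by omega) (by omega)
      linarith
  have hsign : ∀ i, i ≤ 2*k → 0 < (-1:ℝ)^i * D.eval (w i) := by
    intro i hi
    have hPlt : |P.eval (w i)| < m := hcon _ (hwE i hi)
    have h1 : ((-1:ℝ))^i * ((-1:ℝ))^i = 1 := by
      rcases Nat.even_or_odd i with h | h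
      · rw [h.neg_one_pow]; norm_num
      · rw [h.neg_one_pow]; norm_num
    have h2 : (-1:ℝ)^i * P.eval (w i) ≤ |P.eval (w i)| := by
      calc (-1:ℝ)^i * P.eval (w i) ≤ |(-1:ℝ)^i * P.eval (w i)| := le_abs_self _
        _ = |P.eval (w i)| := by rw [abs_mul, abs_pow, abs_neg, abs_one, one_pow, one_mul]
    have hEv : D.eval (w i) = m * (-1)^i - P.eval (w i) := by
      rw [hD, eval_sub, hCw i hi]
    rw [hEv]
    have hexp : (-1:ℝ)^i * (m * (-1)^i - P.eval (w i))
        = m * ((-1:ℝ)^i * (-1:ℝ)^i) - (-1:ℝ)^i * P.eval (w i) := by ring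
    rw [hexp, h1, mul_one]
    linarith
  have := alt_roots D (2*k) w hwmono hsign
  omega


/-- For `0 ≤ b < a` and `E = [-a,-b] ∪ [b,a]`, the Chebyshev constant of `E` is
`√(a²-b²)/2`; in particular `t_{2k}(E) = 2 ((a²-b²)/4)^k`. -/
theorem stmt_16 (a b : ℝ) (hb : 0 ≤ b) (hab : b < a) (t : ℕ → ℝ)
    (ht : ∀ n : ℕ, t n = sInf {r : ℝ | ∃ P : Polynomial ℝ, P.Monic ∧
      P.natDegree = n ∧
      r = sSup ((fun x => |P.eval x|) '' (Set.Icc (-a) (-b) ∪ Set.Icc b a))}) :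
    (∀ k : ℕ, 1 ≤ k → t (2 * k) = 2 * ((a ^ 2 - b ^ 2) / 4) ^ k) ∧
    Filter.Tendsto (fun n : ℕ => (t n) ^ ((n : ℝ)⁻¹)) Filter.atTop
      (nhds (Real.sqrt (a ^ 2 - b ^ 2) / 2)) := by
  have ha : 0 < a := lt_of_le_of_lt hb hab
  set E : Set ℝ := Set.Icc (-a) (-b) ∪ Set.Icc b a with hE
  set S : ℕ → Set ℝ := fun n => {r : ℝ | ∃ P : Polynomial ℝ, P.Monic ∧
      P.natDegree = n ∧ r = sSup ((fun x => |P.eval x|) '' E)} with hS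
  have htS : ∀ n, t n = sInf (S n) := ht
  have hEc : IsCompact E := IsCompact.union isCompact_Icc isCompact_Icc
  have haE : a ∈ E := Or.inr ⟨le_of_lt hab, le_refl a⟩
  have hBdd : ∀ P : ℝ[X], BddAbove ((fun x => |P.eval x|) '' E) := fun P =>
    hEc.bddAbove_image ((Polynomial.continuous P).abs.continuousOn)
  have hnn : ∀ n, ∀ r ∈ S n, 0 ≤ r := by
    rintro n r ⟨P, hPm, hPd, rfl⟩
    exact le_trans (abs_nonneg _) (le_csSup (hBdd P) ⟨a, haE, rfl⟩)
  have hSne : ∀ n, (S n).Nonempty := fun n =>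
    ⟨_, X ^ n, monic_X_pow n, natDegree_X_pow n, rfl⟩
  have hSbdd : ∀ n, BddBelow (S n) := fun n => ⟨0, fun r hr => hnn n r hr⟩
  have ht0 : ∀ n, 0 ≤ t n := fun n => by rw [htS]; exact le_csInf (hSne n) (hnn n)
  -- even degrees
  have hteven : ∀ k : ℕ, 1 ≤ k → t (2 * k) = 2 * ((a ^ 2 - b ^ 2) / 4) ^ k := by
    intro k hk
    obtain ⟨hCm, hCd⟩ := Cpoly_monic hb hab hk
    have hgt := Cpoly_bound hb hab hk
    rw [htS]
    apply le_antisymm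
    · exact csInf_le (hSbdd _) ⟨Cpoly a b k, hCm, hCd, hgt.csSup_eq.symm⟩
    · apply le_csInf (hSne _)
      rintro r ⟨P, hPm, hPd, rfl⟩
      obtain ⟨x, hxE, hx⟩ := Cpoly_lower hb hab hk P hPm hPd
      exact le_trans hx (le_csSup (hBdd P) ⟨x, hxE, rfl⟩)
  refine ⟨hteven, ?_⟩
  -- step bound
  have hstep : ∀ n, t (n + 1) ≤ a * t n := by
    intro n
    have key : ∀ r ∈ S n, t (n + 1) ≤ a * r := by
      rintro r ⟨P, hPm, hPd, rfl⟩
      have hmem : sSup ((fun x => |(P * X).eval x|) '' E) ∈ S (n + 1) :=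
        ⟨P * X, hPm.mul monic_X, by rw [hPm.natDegree_mul monic_X, hPd, natDegree_X], rfl⟩
      have hnonneg : 0 ≤ sSup ((fun x => |P.eval x|) '' E) :=
        hnn n _ ⟨P, hPm, hPd, rfl⟩
      have hle : sSup ((fun x => |(P * X).eval x|) '' E) ≤
          a * sSup ((fun x => |P.eval x|) '' E) := by
        apply csSup_le ((Set.nonempty_of_mem haE).image _)
        rintro _ ⟨x, hxE, rfl⟩
        have h1 : |P.eval x| ≤ sSup ((fun x => |P.eval x|) '' E) :=
          le_csSup (hBdd P) ⟨x, hxE, rfl⟩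
        have h2 : |x| ≤ a := (abs_mem_of_mem_E hb hxE).2
        calc |(P * X).eval x| = |P.eval x| * |x| := by rw [eval_mul, eval_X, abs_mul]
          _ ≤ sSup ((fun x => |P.eval x|) '' E) * a :=
            mul_le_mul h1 h2 (abs_nonneg x) hnonneg
          _ = a * sSup ((fun x => |P.eval x|) '' E) := mul_comm _ _
      calc t (n + 1) = sInf (S (n + 1)) := htS _
        _ ≤ _ := csInf_le (hSbdd _) hmem
        _ ≤ a * _ := hle
    have hdiv : t (n + 1) / a ≤ t n := by
      rw [htS n]
      apply le_csInf (hSne n)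
      intro r hr
      rw [div_le_iff₀ ha]
      calc t (n + 1) ≤ a * r := key r hr
        _ = r * a := mul_comm a r
    calc t (n + 1) = t (n + 1) / a * a := by field_simp
      _ ≤ t n * a := mul_le_mul_of_nonneg_right hdiv (le_of_lt ha)
      _ = a * t n := mul_comm _ _
  have ht1 : t 1 ≤ a := by
    have hmem : sSup ((fun x => |(X : ℝ[X]).eval x|) '' E) ∈ S 1 :=
      ⟨X, monic_X, natDegree_X, rfl⟩
    have hle : sSup ((fun x => |(X : ℝ[X]).eval x|) '' E) ≤ a := by
      apply csSup_le ((Set.nonempty_of_mem haE).image _)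
      rintro _ ⟨x, hxE, rfl⟩
      simpa using (abs_mem_of_mem_E hb hxE).2
    calc t 1 = sInf (S 1) := htS 1
      _ ≤ _ := csInf_le (hSbdd 1) hmem
      _ ≤ a := hle
  -- the limit
  have hs : (0:ℝ) < a ^ 2 - b ^ 2 := by nlinarith
  set c : ℝ := Real.sqrt (a ^ 2 - b ^ 2) / 2 with hcdef
  have hc : 0 < c := by
    rw [hcdef]
    have := Real.sqrt_pos.mpr hs
    positivity
  have hcsq : c ^ 2 = (a ^ 2 - b ^ 2) / 4 := by
    rw [hcdef, div_pow, Real.sq_sqrt (le_of_lt hs)]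
    norm_num
  have hpowc : ∀ k : ℕ, 2 * ((a ^ 2 - b ^ 2) / 4) ^ k = 2 * c ^ (2 * k) := by
    intro k
    rw [← hcsq, pow_mul]
  set cl : ℝ := min (2 * c / a) 2 with hcl
  set cu : ℝ := max (2 * a / c) 2 with hcu
  have hclpos : 0 < cl := lt_min (by positivity) (by norm_num)
  have hcupos : 0 < cu := lt_of_lt_of_le (by norm_num) (le_max_right _ _)
  have hlow : ∀ n : ℕ, 1 ≤ n → cl * c ^ n ≤ t n := by
    intro n hn
    rcases Nat.even_or_odd n with ⟨k, hk⟩ | ⟨k, hk⟩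
    · have hk2 : n = 2 * k := by omega
      have hk1 : 1 ≤ k := by omega
      rw [hk2, hteven k hk1, hpowc k, ← hk2]
      exact mul_le_mul_of_nonneg_right (min_le_right _ _) (by positivity)
    · have hk2 : n + 1 = 2 * (k + 1) := by omega
      have h1 : t (n + 1) = 2 * c ^ (n + 1) := by
        rw [hk2, hteven (k + 1) (by omega), hpowc, ← hk2]
      have h2 := hstep n
      calc cl * c ^ n ≤ (2 * c / a) * c ^ n :=
            mul_le_mul_of_nonneg_right (min_le_left _ _) (by positivity)
        _ ≤ t n := by
            rw [div_mul_eq_mul_div, div_le_iff₀ ha]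
            have h3 : 2 * c * c ^ n = t (n + 1) := by rw [h1, pow_succ]; ring
            rw [h3]
            linarith
  have hup : ∀ n : ℕ, 1 ≤ n → t n ≤ cu * c ^ n := by
    intro n hn
    rcases Nat.even_or_odd n with ⟨k, hk⟩ | ⟨k, hk⟩
    · have hk2 : n = 2 * k := by omega
      have hk1 : 1 ≤ k := by omega
      rw [hk2, hteven k hk1, hpowc k, ← hk2]
      exact mul_le_mul_of_nonneg_right (le_max_right _ _) (by positivity)
    · rcases Nat.eq_zero_or_pos k with hk0 | hk1
      · have hn1 : n = 1 := by omega
        rw [hn1, pow_one]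
        calc t 1 ≤ a := ht1
          _ ≤ (2 * a / c) * c := by
              rw [div_mul_eq_mul_div, mul_div_assoc, div_self (ne_of_gt hc)]
              nlinarith
          _ ≤ cu * c := mul_le_mul_of_nonneg_right (le_max_left _ _) (le_of_lt hc)
      · have hm1 : n - 1 = 2 * k := by omega
        have hstepn := hstep (n - 1)
        rw [show n - 1 + 1 = n by omega] at hstepn
        have h1 : t (n - 1) = 2 * c ^ (n - 1) := by
          rw [hm1, hteven k hk1, hpowc k, ← hm1]
        calc t n ≤ a * t (n - 1) := hstepn
          _ = 2 * a * c ^ (n - 1) := by rw [h1]; ring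
          _ = (2 * a / c) * c ^ n := by
              rw [show n = (n - 1) + 1 by omega, pow_succ]
              field_simp
              ring
              rw [Nat.add_sub_cancel_left]
          _ ≤ cu * c ^ n := mul_le_mul_of_nonneg_right (le_max_left _ _) (by positivity)
  -- rpow bounds
  have hone : ∀ d : ℝ, 0 < d → Filter.Tendsto (fun n : ℕ => d ^ ((n : ℝ)⁻¹))
      Filter.atTop (nhds 1) := by
    intro d hd
    have h1 : (fun n : ℕ => d ^ ((n : ℝ)⁻¹)) = fun n : ℕ => Real.exp (Real.log d * (n : ℝ)⁻¹) := by
      funext n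
      rw [Real.rpow_def_of_pos hd]
    rw [h1]
    have h2 : Filter.Tendsto (fun n : ℕ => Real.log d * (n : ℝ)⁻¹) Filter.atTop (nhds 0) := by
      simpa using tendsto_inv_atTop_nhds_zero_nat.const_mul (Real.log d)
    have h3 := (Real.continuous_exp.tendsto 0).comp h2
    simpa [Function.comp_def] using h3
  have hL : Filter.Tendsto (fun n : ℕ => cl ^ ((n : ℝ)⁻¹) * c) Filter.atTop (nhds c) := by
    simpa using (hone cl hclpos).mul_const c
  have hU : Filter.Tendsto (fun n : ℕ => cu ^ ((n : ℝ)⁻¹) * c) Filter.atTop (nhds c) := by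
    simpa using (hone cu hcupos).mul_const c
  have hrpow_eq : ∀ d : ℝ, 0 < d → ∀ n : ℕ, 1 ≤ n →
      (d * c ^ n) ^ ((n : ℝ)⁻¹) = d ^ ((n : ℝ)⁻¹) * c := by
    intro d hd n hn
    rw [Real.mul_rpow (le_of_lt hd) (by positivity)]
    congr 1
    rw [← Real.rpow_natCast c n, ← Real.rpow_mul (le_of_lt hc),
      mul_inv_cancel₀ (Nat.cast_ne_zero.mpr (by omega) : (n:ℝ) ≠ 0), Real.rpow_one]
  have hsqL : ∀ᶠ n : ℕ in Filter.atTop, cl ^ ((n : ℝ)⁻¹) * c ≤ t n ^ ((n : ℝ)⁻¹) := by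
    filter_upwards [Filter.eventually_ge_atTop 1] with n hn
    rw [← hrpow_eq cl hclpos n hn]
    exact Real.rpow_le_rpow (by positivity) (hlow n hn) (by positivity)
  have hsqU : ∀ᶠ n : ℕ in Filter.atTop, t n ^ ((n : ℝ)⁻¹) ≤ cu ^ ((n : ℝ)⁻¹) * c := by
    filter_upwards [Filter.eventually_ge_atTop 1] with n hn
    rw [← hrpow_eq cu hcupos n hn]
    exact Real.rpow_le_rpow (ht0 n) (hup n hn) (by positivity)
  exact tendsto_of_tendsto_of_tendsto_of_le_of_le' hL hU hsqL hsqU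
end Key
end
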